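/- arXiv:2602.03906 — 6 statements merged into one kernel-verified Lean document; each statement's English description precedes it below -/
import Mathlib

section
/- Let α and β be nonempty finite types, let p be a pmf on α × β with marginals p₁ and p₂, and let q be a pmf on α and r a pmf on β such that q a > 0 whenever p₁ a > 0 and r b > 0 whenever p₂ b > 0. Then KL(p ‖ q ⊗ r) = I(p) + KL(p₁ ‖ q) + KL(p₂ ‖ r), where I(p) = KL(p ‖ p₁ ⊗ p₂) is the mutual information of p. -/
open Finset

/-- `p` is a probability mass function on the finite type `α`. -/
def IsPMF {α : Type*} [Fintype α] (p : α → ℝ) : Prop :=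
  (∀ a, 0 ≤ p a) ∧ ∑ a, p a = 1

/-- Kullback–Leibler divergence between pmfs on a finite type
(the convention `0 * log 0 = 0` holds automatically). -/
noncomputable def KL {α : Type*} [Fintype α] (p q : α → ℝ) : ℝ :=
  ∑ a, p a * Real.log (p a / q a)

/-- First marginal of a pmf on a product type. -/
def margFst {α β : Type*} [Fintype β] (p : α × β → ℝ) : α → ℝ :=
  fun a => ∑ b, p (a, b)

/-- Second marginal of a pmf on a product type. -/
def margSnd {α β : Type*} [Fintype α] (p : α × β → ℝ) : β → ℝ :=
  fun b => ∑ a, p (a, b)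

/-- Product pmf `(q ⊗ r) (a, b) = q a * r b`. -/
def prodPMF {α β : Type*} (q : α → ℝ) (r : β → ℝ) : α × β → ℝ :=
  fun x => q x.1 * r x.2

/-- Mutual information `I(p) = KL(p ‖ p₁ ⊗ p₂)`. -/
noncomputable def mutualInfo {α β : Type*} [Fintype α] [Fintype β] (p : α × β → ℝ) : ℝ :=
  KL p (prodPMF (margFst p) (margSnd p))


/-- **KL chain decomposition for product references.**
For a joint pmf `p` on `α × β` with marginals `p₁, p₂`, and reference pmfs `q, r`
positive wherever the marginals are positive,
`KL(p ‖ q ⊗ r) = I(p) + KL(p₁ ‖ q) + KL(p₂ ‖ r)`. -/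
theorem kl_prod_decomposition {α β : Type*} [Fintype α] [Fintype β]
    [Nonempty α] [Nonempty β]
    (p : α × β → ℝ) (hp : IsPMF p)
    (q : α → ℝ) (hq : IsPMF q)
    (r : β → ℝ) (hr : IsPMF r)
    (hq_pos : ∀ a, 0 < margFst p a → 0 < q a)
    (hr_pos : ∀ b, 0 < margSnd p b → 0 < r b) :
    KL p (prodPMF q r)
      = mutualInfo p + KL (margFst p) q + KL (margSnd p) r := by
  obtain ⟨hp0, hp1⟩ := hp
  have key : ∀ x : α × β,
      p x * Real.log (p x / (q x.1 * r x.2))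
        = p x * Real.log (p x / (margFst p x.1 * margSnd p x.2))
          + p x * Real.log (margFst p x.1 / q x.1)
          + p x * Real.log (margSnd p x.2 / r x.2) := by
    rintro ⟨a, b⟩
    rcases eq_or_lt_of_le (hp0 (a, b)) with h | h
    · simp [← h]
    · have h1 : 0 < margFst p a :=
        lt_of_lt_of_le h (Finset.single_le_sum (fun b' _ => hp0 (a, b')) (Finset.mem_univ b))
      have h2 : 0 < margSnd p b :=
        lt_of_lt_of_le h (Finset.single_le_sum (fun a' _ => hp0 (a', b)) (Finset.mem_univ a))
      have hqa := hq_pos a h1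
      have hrb := hr_pos b h2
      rw [Real.log_div h.ne' (by positivity), Real.log_div h.ne' (by positivity),
        Real.log_div h1.ne' hqa.ne', Real.log_div h2.ne' hrb.ne',
        Real.log_mul hqa.ne' hrb.ne', Real.log_mul h1.ne' h2.ne']
      ring
  have e1 : KL p (prodPMF q r)
      = ∑ x : α × β, p x * Real.log (p x / (q x.1 * r x.2)) := rfl
  have eI : mutualInfo p
      = ∑ x : α × β, p x * Real.log (p x / (margFst p x.1 * margSnd p x.2)) := rfl
  have e2 : KL (margFst p) q
      = ∑ x : α × β, p x * Real.log (margFst p x.1 / q x.1) := by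
    rw [KL, Fintype.sum_prod_type]
    exact Finset.sum_congr rfl fun a _ => by rw [margFst, Finset.sum_mul]; rfl
  have e3 : KL (margSnd p) r
      = ∑ x : α × β, p x * Real.log (margSnd p x.2 / r x.2) := by
    rw [KL, Fintype.sum_prod_type_right]
    exact Finset.sum_congr rfl fun b _ => by rw [margSnd, Finset.sum_mul]; rfl
  rw [e1, eI, e2, e3, ← Finset.sum_add_distrib, ← Finset.sum_add_distrib]
  exact Finset.sum_congr rfl fun x _ => key x
end

section
/- Let α and β be nonempty finite types and let p be a pmf on α × β with marginals p₁ and p₂. Then over all pairs (q, r) of pmfs on α and β respectively with q a > 0 whenever p₁ a > 0 and r b > 0 whenever p₂ b > 0, the quantity KL(p ‖ q ⊗ r) is minimized exactly at (q, r) = (p₁, p₂) with minimal value equal to the mutual information I(p); that is, KL(p ‖ q ⊗ r) ≥ I(p) for every admissible (q, r), with KL(p ‖ p₁ ⊗ p₂) = I(p), and if moreover p₁, p₂, q, r are strictly positive then equality KL(p ‖ q ⊗ r) = I(p) holds if and only if q = p₁ and r = p₂. -/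
open Finset

lemma gibbs_point {s t : ℝ} (hs : 0 ≤ s) (ht : 0 ≤ t) (hst : 0 < s → 0 < t) :
    0 ≤ (t - s) + s * Real.log (s / t) := by
  rcases eq_or_lt_of_le hs with h | h
  · simp [← h, ht]
  · have ht' := hst h
    have hx : 0 < t / s := div_pos ht' h
    have h1 := Real.log_le_sub_one_of_pos hx
    have hlog : Real.log (s / t) = - Real.log (t / s) := by
      rw [← Real.log_inv]; congr 1; field_simp
    have hts : s * (t / s) = t := mul_div_cancel₀ t h.ne'
    nlinarith [mul_le_mul_of_nonneg_left h1 hs]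

lemma gibbs_point_strict {s t : ℝ} (hs : 0 < s) (ht : 0 < t) (hne : t ≠ s) :
    0 < (t - s) + s * Real.log (s / t) := by
  have hx : 0 < t / s := div_pos ht hs
  have hx1 : t / s ≠ 1 := by
    intro h; exact hne (by field_simp at h; linarith)
  have h1 := Real.log_lt_sub_one_of_pos hx hx1
  have hlog : Real.log (s / t) = - Real.log (t / s) := by
    rw [← Real.log_inv]; congr 1; field_simp
  have hts : s * (t / s) = t := mul_div_cancel₀ t hs.ne'
  nlinarith [mul_lt_mul_of_pos_left h1 hs]

lemma KL_eq_sum {γ : Type*} [Fintype γ] (s t : γ → ℝ) (hs : IsPMF s) (ht : IsPMF t) :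
    KL s t = ∑ a, ((t a - s a) + s a * Real.log (s a / t a)) := by
  unfold KL
  rw [Finset.sum_add_distrib, Finset.sum_sub_distrib, hs.2, ht.2]
  ring

lemma KL_nonneg {γ : Type*} [Fintype γ] (s t : γ → ℝ) (hs : IsPMF s) (ht : IsPMF t)
    (hpos : ∀ a, 0 < s a → 0 < t a) : 0 ≤ KL s t := by
  rw [KL_eq_sum s t hs ht]
  exact Finset.sum_nonneg fun a _ => gibbs_point (hs.1 a) (ht.1 a) (hpos a)

lemma KL_self {γ : Type*} [Fintype γ] (s : γ → ℝ) : KL s s = 0 := by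
  unfold KL
  apply Finset.sum_eq_zero
  intro a _
  rcases eq_or_ne (s a) 0 with h | h
  · simp [h]
  · simp [div_self h]

lemma KL_eq_zero {γ : Type*} [Fintype γ] (s t : γ → ℝ) (hs : IsPMF s) (ht : IsPMF t)
    (hspos : ∀ a, 0 < s a) (htpos : ∀ a, 0 < t a) (h : KL s t = 0) : t = s := by
  rw [KL_eq_sum s t hs ht] at h
  have hz := (Finset.sum_eq_zero_iff_of_nonneg
    (fun a _ => gibbs_point (hs.1 a) (ht.1 a) (fun _ => htpos a))).mp h
  funext a
  by_contra hne
  exact absurd (hz a (Finset.mem_univ a)).symm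
    (ne_of_lt (gibbs_point_strict (hspos a) (htpos a) hne))

lemma margFst_pmf {α β : Type*} [Fintype α] [Fintype β] (p : α × β → ℝ) (hp : IsPMF p) :
    IsPMF (margFst p) := by
  constructor
  · intro a; exact Finset.sum_nonneg fun b _ => hp.1 _
  · rw [← hp.2, Fintype.sum_prod_type]; rfl

lemma margSnd_pmf {α β : Type*} [Fintype α] [Fintype β] (p : α × β → ℝ) (hp : IsPMF p) :
    IsPMF (margSnd p) := by
  constructor
  · intro b; exact Finset.sum_nonneg fun a _ => hp.1 _
  · rw [← hp.2, Fintype.sum_prod_type_right]; rfl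

lemma decomp {α β : Type*} [Fintype α] [Fintype β] (p : α × β → ℝ) (hp : IsPMF p)
    (q : α → ℝ) (r : β → ℝ)
    (hq : ∀ a, 0 < margFst p a → 0 < q a) (hr : ∀ b, 0 < margSnd p b → 0 < r b) :
    KL p (prodPMF q r) = mutualInfo p + KL (margFst p) q + KL (margSnd p) r := by
  have hm1 : ∀ x : α × β, 0 < p x → 0 < margFst p x.1 := by
    intro x hx
    exact lt_of_lt_of_le hx (Finset.single_le_sum (f := fun b => p (x.1, b))
      (fun b _ => hp.1 _) (Finset.mem_univ x.2))
  have hm2 : ∀ x : α × β, 0 < p x → 0 < margSnd p x.2 := by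
    intro x hx
    exact lt_of_lt_of_le hx (Finset.single_le_sum (f := fun a => p (a, x.2))
      (fun a _ => hp.1 _) (Finset.mem_univ x.1))
  have key : ∀ x : α × β, p x * Real.log (p x / (q x.1 * r x.2)) =
      p x * Real.log (p x / (margFst p x.1 * margSnd p x.2)) +
      p x * Real.log (margFst p x.1 / q x.1) +
      p x * Real.log (margSnd p x.2 / r x.2) := by
    intro x
    rcases eq_or_lt_of_le (hp.1 x) with h | h
    · simp [← h]
    · have h1 := hm1 x h
      have h2 := hm2 x h
      have hq' := hq x.1 h1
      have hr' := hr x.2 h2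
      rw [Real.log_div h.ne' (by positivity), Real.log_div h.ne' (by positivity),
        Real.log_div h1.ne' hq'.ne', Real.log_div h2.ne' hr'.ne',
        Real.log_mul hq'.ne' hr'.ne', Real.log_mul h1.ne' h2.ne']
      ring
  have e1 : ∑ x : α × β, p x * Real.log (margFst p x.1 / q x.1) = KL (margFst p) q := by
    rw [Fintype.sum_prod_type]
    unfold KL
    refine Finset.sum_congr rfl fun a _ => ?_
    calc ∑ y : β, p (a, y) * Real.log (margFst p (a, y).1 / q (a, y).1)
        = (∑ y : β, p (a, y)) * Real.log (margFst p a / q a) := by rw [Finset.sum_mul]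
      _ = _ := rfl
  have e2 : ∑ x : α × β, p x * Real.log (margSnd p x.2 / r x.2) = KL (margSnd p) r := by
    rw [Fintype.sum_prod_type_right]
    unfold KL
    refine Finset.sum_congr rfl fun b _ => ?_
    calc ∑ x : α, p (x, b) * Real.log (margSnd p (x, b).2 / r (x, b).2)
        = (∑ x : α, p (x, b)) * Real.log (margSnd p b / r b) := by rw [Finset.sum_mul]
      _ = _ := rfl
  have : KL p (prodPMF q r) = ∑ x : α × β, (p x * Real.log (p x / (margFst p x.1 * margSnd p x.2)) +
      p x * Real.log (margFst p x.1 / q x.1) + p x * Real.log (margSnd p x.2 / r x.2)) := by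
    unfold KL prodPMF
    exact Finset.sum_congr rfl fun x _ => key x
  rw [this, Finset.sum_add_distrib, Finset.sum_add_distrib, e1, e2]
  rfl

/-- **Mutual information as a KL projection onto the independence manifold.**
`KL(p ‖ q ⊗ r)` over admissible `(q, r)` is minimized exactly at `(p₁, p₂)`, with
minimum value `I(p)`; under strict positivity the equality case characterizes the
minimizer. -/
theorem kl_projection_onto_independence {α β : Type*} [Fintype α] [Fintype β]
    [Nonempty α] [Nonempty β]
    (p : α × β → ℝ) (hp : IsPMF p) :
    (∀ (q : α → ℝ) (r : β → ℝ), IsPMF q → IsPMF r →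
        (∀ a, 0 < margFst p a → 0 < q a) → (∀ b, 0 < margSnd p b → 0 < r b) →
        mutualInfo p ≤ KL p (prodPMF q r)) ∧
    KL p (prodPMF (margFst p) (margSnd p)) = mutualInfo p ∧
    (∀ (q : α → ℝ) (r : β → ℝ), IsPMF q → IsPMF r →
        (∀ a, 0 < margFst p a) → (∀ b, 0 < margSnd p b) →
        (∀ a, 0 < q a) → (∀ b, 0 < r b) →
        (KL p (prodPMF q r) = mutualInfo p ↔ q = margFst p ∧ r = margSnd p)) := by

  have h1 := margFst_pmf p hp
  have h2 := margSnd_pmf p hp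
  refine ⟨?_, rfl, ?_⟩
  · intro q r hq hr hq' hr'
    rw [decomp p hp q r hq' hr']
    have := KL_nonneg (margFst p) q h1 hq hq'
    have := KL_nonneg (margSnd p) r h2 hr hr'
    linarith
  · intro q r hq hr hmf hms hq' hr'
    rw [decomp p hp q r (fun a _ => hq' a) (fun b _ => hr' b)]
    constructor
    · intro h
      have e1 := KL_nonneg (margFst p) q h1 hq (fun a _ => hq' a)
      have e2 := KL_nonneg (margSnd p) r h2 hr (fun b _ => hr' b)
      have z1 : KL (margFst p) q = 0 := by linarith
      have z2 : KL (margSnd p) r = 0 := by linarith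
      exact ⟨KL_eq_zero _ _ h1 hq hmf hq' z1, KL_eq_zero _ _ h2 hr hms hr' z2⟩
    · rintro ⟨rfl, rfl⟩
      rw [KL_self, KL_self]; ring
end

section
/- Let α and γ be nonempty finite types, let p be a pmf on α, and for each a ∈ α let k(·|a) be a pmf on γ (a conditional encoder). Define the latent marginal m z = ∑_a p a * k(z|a), and let r be a pmf on γ with r z > 0 whenever m z > 0. Then ∑_a p a * KL(k(·|a) ‖ r) = ∑_a p a * KL(k(·|a) ‖ m) + KL(m ‖ r). In particular ∑_a p a * KL(k(·|a) ‖ r) ≥ ∑_a p a * KL(k(·|a) ‖ m) (the mutual information between the input and the latent variable), and if r and m are strictly positive then equality holds if and only if r = m. -/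
open Finset

lemma pointwise_gibbs {γ : Type*} [Fintype γ] (p q : γ → ℝ) (hp : IsPMF p)
    (hpos : ∀ z, 0 < p z → 0 < q z) (z : γ) (hq0 : 0 ≤ q z) :
    p z - q z ≤ p z * Real.log (p z / q z) := by
  rcases eq_or_lt_of_le (hp.1 z) with h0 | h0
  · simp [← h0]; linarith
  · have hqz := hpos z h0
    have hlog : Real.log (q z / p z) ≤ q z / p z - 1 :=
      Real.log_le_sub_one_of_pos (div_pos hqz h0)
    have hne : Real.log (p z / q z) = - Real.log (q z / p z) := by
      rw [← Real.log_inv]; congr 1; field_simp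
    rw [hne]
    have h2 := mul_le_mul_of_nonneg_left hlog (le_of_lt h0)
    have h3 : p z * (q z / p z - 1) = q z - p z := by field_simp
    linarith [h2, h3.symm ▸ h2]

lemma gibbs_nonneg {γ : Type*} [Fintype γ] (p q : γ → ℝ) (hp : IsPMF p) (hq : IsPMF q)
    (hpos : ∀ z, 0 < p z → 0 < q z) : 0 ≤ KL p q := by
  have : (0:ℝ) = ∑ z, (p z - q z) := by
    rw [Finset.sum_sub_distrib, hp.2, hq.2]; ring
  rw [KL, this]
  exact Finset.sum_le_sum (fun z _ => pointwise_gibbs p q hp hpos z (hq.1 z))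

lemma gibbs_eq_zero {γ : Type*} [Fintype γ] (p q : γ → ℝ) (hp : IsPMF p) (hq : IsPMF q)
    (hppos : ∀ z, 0 < p z) (hqpos : ∀ z, 0 < q z) (h0 : KL p q = 0) : q = p := by
  by_contra hne
  have : ∃ z, q z ≠ p z := by
    by_contra h; push_neg at h; exact hne (funext h)
  obtain ⟨z0, hz0⟩ := this
  have hstrict : p z0 - q z0 < p z0 * Real.log (p z0 / q z0) := by
    have hratio : q z0 / p z0 ≠ 1 := by
      intro h; exact hz0 ((div_eq_one_iff_eq (ne_of_gt (hppos z0))).mp h)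
    have hlog : Real.log (q z0 / p z0) < q z0 / p z0 - 1 :=
      Real.log_lt_sub_one_of_pos (div_pos (hqpos z0) (hppos z0)) hratio
    have hne2 : Real.log (p z0 / q z0) = - Real.log (q z0 / p z0) := by
      rw [← Real.log_inv]; congr 1; field_simp
    rw [hne2]
    have hp0 : p z0 ≠ 0 := ne_of_gt (hppos z0)
    have h2 := mul_lt_mul_of_pos_left hlog (hppos z0)
    have h3 : p z0 * (q z0 / p z0 - 1) = q z0 - p z0 := by field_simp
    nlinarith
  have hlt : ∑ z, (p z - q z) < ∑ z, p z * Real.log (p z / q z) :=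
    Finset.sum_lt_sum
      (fun z _ => pointwise_gibbs p q hp (fun z _ => hqpos z) z (hq.1 z))
      ⟨z0, Finset.mem_univ z0, hstrict⟩
  have hsum0 : ∑ z, (p z - q z) = 0 := by
    rw [Finset.sum_sub_distrib, hp.2, hq.2]; ring
  rw [hsum0, ← KL] at hlt
  linarith

/-- **Marginal optimality of the compression prior.** -/
theorem encoder_kl_decomposition {α γ : Type*} [Fintype α] [Fintype γ]
    [Nonempty α] [Nonempty γ]
    (p : α → ℝ) (hp : IsPMF p)
    (k : α → γ → ℝ) (hk : ∀ a, IsPMF (k a))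
    (m : γ → ℝ) (hm : m = fun z => ∑ a, p a * k a z)
    (r : γ → ℝ) (hr : IsPMF r)
    (hr_pos : ∀ z, 0 < m z → 0 < r z) :
    (∑ a, p a * KL (k a) r) = (∑ a, p a * KL (k a) m) + KL m r ∧
    (∑ a, p a * KL (k a) m) ≤ (∑ a, p a * KL (k a) r) ∧
    ((∀ z, 0 < r z) → (∀ z, 0 < m z) →
      ((∑ a, p a * KL (k a) r) = (∑ a, p a * KL (k a) m) ↔ r = m)) := by
  have hm_pmf : IsPMF m := by
    subst hm
    constructor
    · intro z
      exact Finset.sum_nonneg (fun a _ => mul_nonneg (hp.1 a) ((hk a).1 z))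
    · rw [Finset.sum_comm]
      calc ∑ a, ∑ z, p a * k a z = ∑ a, p a * ∑ z, k a z := by
            simp [Finset.mul_sum]
        _ = 1 := by simp only [(fun a => (hk a).2)]; simp [hp.2]
  have hpt : ∀ a z, p a * (k a z * Real.log (k a z / r z)) =
      p a * (k a z * Real.log (k a z / m z)) + p a * k a z * Real.log (m z / r z) := by
    intro a z
    rcases eq_or_lt_of_le (hp.1 a) with hpa | hpa
    · simp [← hpa]
    rcases eq_or_lt_of_le ((hk a).1 z) with hkz | hkz
    · simp [← hkz]
    have hmz : 0 < m z := by
      rw [hm]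
      have : (0:ℝ) < p a * k a z := mul_pos hpa hkz
      refine lt_of_lt_of_le this ?_
      exact Finset.single_le_sum
        (fun a' _ => mul_nonneg (hp.1 a') ((hk a').1 z)) (Finset.mem_univ a)
    have hrz : 0 < r z := hr_pos z hmz
    have h1 : Real.log (k a z / r z) = Real.log (k a z) - Real.log (r z) :=
      Real.log_div (ne_of_gt hkz) (ne_of_gt hrz)
    have h2 : Real.log (k a z / m z) = Real.log (k a z) - Real.log (m z) :=
      Real.log_div (ne_of_gt hkz) (ne_of_gt hmz)
    have h3 : Real.log (m z / r z) = Real.log (m z) - Real.log (r z) :=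
      Real.log_div (ne_of_gt hmz) (ne_of_gt hrz)
    rw [h1, h2, h3]; ring
  have key : (∑ a, p a * KL (k a) r) = (∑ a, p a * KL (k a) m) + KL m r := by
    simp only [KL, Finset.mul_sum]
    calc ∑ a, ∑ z, p a * (k a z * Real.log (k a z / r z))
        = ∑ a, ∑ z, (p a * (k a z * Real.log (k a z / m z))
            + p a * k a z * Real.log (m z / r z)) := by
          refine Finset.sum_congr rfl fun a _ => Finset.sum_congr rfl fun z _ => hpt a z
      _ = (∑ a, ∑ z, p a * (k a z * Real.log (k a z / m z)))
            + ∑ a, ∑ z, p a * k a z * Real.log (m z / r z) := by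
          rw [← Finset.sum_add_distrib]
          exact Finset.sum_congr rfl fun a _ => Finset.sum_add_distrib
      _ = (∑ a, ∑ z, p a * (k a z * Real.log (k a z / m z)))
            + ∑ z, m z * Real.log (m z / r z) := by
          congr 1
          rw [Finset.sum_comm]
          refine Finset.sum_congr rfl fun z _ => ?_
          rw [hm, Finset.sum_mul]
  have hnonneg : 0 ≤ KL m r := gibbs_nonneg m r hm_pmf hr hr_pos
  refine ⟨key, by linarith, ?_⟩
  intro hrp hmp
  constructor
  · intro heq
    have hKL0 : KL m r = 0 := by linarith
    exact gibbs_eq_zero m r hm_pmf hr hmp hrp hKL0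
  · intro hrm
    rw [hrm]
end

section
/- Let β and γ be nonempty finite types and let p be a pmf on β × γ (the joint law of (Y,Z)) with marginals p_Y and p_Z. For each z ∈ γ let q(·|z) be a pmf on β with q(y|z) > 0 whenever p(y,z) > 0. Then the variational (Barber–Agakov) lower bound holds: I(p) ≥ H(Y) + ∑_{(y,z)} p(y,z) * Real.log (q(y|z)), where I(p) = KL(p ‖ p_Y ⊗ p_Z) is the mutual information of p and H(Y) = −∑_y p_Y y * Real.log (p_Y y) is the Shannon entropy of the first marginal. -/
open Finset

/-!
Let `r(y, z) = p_Z(z) q(y|z)`, the joint law obtained by decoding `Z ∼ p_Z` through `q`.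
Splitting the logarithm shows `KL(p ‖ r) = I(p) - H(Y) - 𝔼_p log q(Y|Z)`, and the left side is
nonnegative by Gibbs' inequality.
-/

def condJoint {β γ : Type*} (r : γ → ℝ) (q : γ → β → ℝ) : β × γ → ℝ :=
  fun x => r x.2 * q x.2 x.1

theorem sub_le_mul_log_div {a b : ℝ} (ha : 0 ≤ a) (hb : 0 ≤ b) (hab : 0 < a → 0 < b) :
    a - b ≤ a * Real.log (a / b) := by
  rcases ha.eq_or_lt with rfl | ha
  · simpa using hb
  have hb := hab ha
  have hlog : 1 - b / a ≤ Real.log (a / b) := by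
    simpa only [inv_div] using Real.one_sub_inv_le_log_of_pos (div_pos ha hb)
  calc a - b = a * (1 - b / a) := by field_simp
    _ ≤ a * Real.log (a / b) := mul_le_mul_of_nonneg_left hlog ha.le

theorem KL_nonneg_s4 {α : Type*} [Fintype α] {p r : α → ℝ} (hp : IsPMF p) (hr : IsPMF r)
    (hsupp : ∀ a, 0 < p a → 0 < r a) : 0 ≤ KL p r :=
  calc (0 : ℝ) = ∑ a, p a - ∑ a, r a := by rw [hp.2, hr.2, sub_self]
    _ = ∑ a, (p a - r a) := (sum_sub_distrib _ _).symm
    _ ≤ KL p r := sum_le_sum fun a _ => sub_le_mul_log_div (hp.1 a) (hr.1 a) (hsupp a)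

section Marginals

variable {β γ : Type*} {p : β × γ → ℝ}

theorem margFst_pos_of_pos [Fintype γ] (hp : ∀ x, 0 ≤ p x) {x : β × γ} (hx : 0 < p x) :
    0 < margFst p x.1 :=
  hx.trans_le (single_le_sum (fun z _ => hp (x.1, z)) (mem_univ x.2))

theorem margSnd_pos_of_pos [Fintype β] (hp : ∀ x, 0 ≤ p x) {x : β × γ} (hx : 0 < p x) :
    0 < margSnd p x.2 :=
  hx.trans_le (single_le_sum (fun y _ => hp (y, x.2)) (mem_univ x.1))

theorem sum_margFst_mul [Fintype β] [Fintype γ] (p : β × γ → ℝ) (f : β → ℝ) :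
    ∑ y, margFst p y * f y = ∑ x, p x * f x.1 := by
  simp only [Fintype.sum_prod_type, margFst, sum_mul]

theorem IsPMF.margSnd [Fintype β] [Fintype γ] (hp : IsPMF p) : IsPMF (margSnd p) :=
  ⟨fun z => sum_nonneg fun y _ => hp.1 (y, z), by
    rw [← hp.2, Fintype.sum_prod_type, sum_comm]; rfl⟩

theorem IsPMF.condJoint [Fintype β] [Fintype γ] {r : γ → ℝ} {q : γ → β → ℝ} (hr : IsPMF r)
    (hq : ∀ z, IsPMF (q z)) :
    IsPMF (condJoint r q) :=
  ⟨fun x => mul_nonneg (hr.1 x.2) ((hq x.2).1 x.1), by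
    simp only [_root_.condJoint, Fintype.sum_prod_type_right, ← mul_sum, (hq _).2, mul_one, hr.2]⟩

theorem KL_condJoint_margSnd [Fintype β] [Fintype γ] (hp : ∀ x, 0 ≤ p x) {q : γ → β → ℝ}
    (hq_pos : ∀ y z, 0 < p (y, z) → 0 < q z y) :
    KL p (condJoint (margSnd p) q)
      = mutualInfo p - ((-∑ y, margFst p y * Real.log (margFst p y))
          + ∑ x : β × γ, p x * Real.log (q x.2 x.1)) := by
  have hsplit : ∀ x : β × γ, p x * Real.log (p x / condJoint (margSnd p) q x)
      = p x * Real.log (p x / prodPMF (margFst p) (margSnd p) x)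
        + p x * Real.log (margFst p x.1) - p x * Real.log (q x.2 x.1) := by
    intro x
    rcases (hp x).eq_or_lt with h0 | hx
    · simp [← h0]
    have hY := margFst_pos_of_pos hp hx
    have hZ := margSnd_pos_of_pos hp hx
    have hq : 0 < q x.2 x.1 := hq_pos x.1 x.2 hx
    rw [condJoint, prodPMF, Real.log_div hx.ne' (by positivity), Real.log_div hx.ne' (by positivity),
      Real.log_mul hZ.ne' hq.ne', Real.log_mul hY.ne' hZ.ne']
    ring
  rw [KL, sum_congr rfl fun x _ => hsplit x, sum_sub_distrib, sum_add_distrib, sum_margFst_mul,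
    mutualInfo, KL]
  ring

end Marginals

theorem barber_agakov_bound_general {β γ : Type*} [Fintype β] [Fintype γ]
    (p : β × γ → ℝ) (hp : IsPMF p)
    (q : γ → β → ℝ) (hq : ∀ z, IsPMF (q z))
    (hq_pos : ∀ y z, 0 < p (y, z) → 0 < q z y) :
    (-∑ y, margFst p y * Real.log (margFst p y))
        + ∑ x : β × γ, p x * Real.log (q x.2 x.1)
      ≤ mutualInfo p := by
  have hsupp : ∀ x, 0 < p x → 0 < condJoint (margSnd p) q x := fun x hx =>
    mul_pos (margSnd_pos_of_pos hp.1 hx) (hq_pos x.1 x.2 hx)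
  have hgap := KL_nonneg_s4 hp (hp.margSnd.condJoint hq) hsupp
  rw [KL_condJoint_margSnd hp.1 hq_pos] at hgap
  linarith

/-- **Variational (Barber–Agakov) lower bound on mutual information.**
For any conditional decoder `q(·|z)` positive on the support of the joint pmf `p`,
`I(p) ≥ H(Y) + 𝔼_{(y,z)∼p} log q(y|z)`. -/
theorem barber_agakov_bound {β γ : Type*} [Fintype β] [Fintype γ]
    [Nonempty β] [Nonempty γ]
    (p : β × γ → ℝ) (hp : IsPMF p)
    (q : γ → β → ℝ) (hq : ∀ z, IsPMF (q z))
    (hq_pos : ∀ y z, 0 < p (y, z) → 0 < q z y) :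
    (-∑ y, margFst p y * Real.log (margFst p y))
        + ∑ x : β × γ, p x * Real.log (q x.2 x.1)
      ≤ mutualInfo p :=
  barber_agakov_bound_general p hp q hq hq_pos
end

section
/- Let n : ℕ and let A be a real symmetric positive semidefinite n × n matrix. Then Real.log (Matrix.det (1 + A)) ≤ Matrix.trace A, where 1 denotes the identity matrix. -/
/-! Summing `log λ ≤ λ - 1` over the (positive) eigenvalues `λ` of `1 + A` gives
`log det (1 + A) ≤ trace (1 + A) - n = trace A`. -/

namespace Matrix

variable {ι : Type*} [Fintype ι] [DecidableEq ι] {B : Matrix ι ι ℝ}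

theorem PosDef.log_det_eq_sum_log_eigenvalues (hB : B.PosDef) :
    Real.log B.det = ∑ i, Real.log (hB.isHermitian.eigenvalues i) := by
  rw [hB.isHermitian.det_eq_prod_eigenvalues]
  exact Real.log_prod fun i _ => (hB.eigenvalues_pos i).ne'

theorem PosDef.log_det_le_trace_sub_card (hB : B.PosDef) :
    Real.log B.det ≤ B.trace - Fintype.card ι := by
  rw [hB.log_det_eq_sum_log_eigenvalues, hB.isHermitian.trace_eq_sum_eigenvalues]
  calc ∑ i, Real.log (hB.isHermitian.eigenvalues i)
      ≤ ∑ i, (hB.isHermitian.eigenvalues i - 1) :=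
        Finset.sum_le_sum fun i _ => Real.log_le_sub_one_of_pos (hB.eigenvalues_pos i)
    _ = ∑ i, (hB.isHermitian.eigenvalues i : ℝ) - Fintype.card ι := by simp

end Matrix

/-- **log-det–trace inequality.** For a real symmetric positive semidefinite matrix
`A`, `log det (1 + A) ≤ trace A`. -/
theorem log_det_one_add_le_trace (n : ℕ) (A : Matrix (Fin n) (Fin n) ℝ)
    (hA : A.PosSemidef) :
    Real.log (Matrix.det (1 + A)) ≤ Matrix.trace A := by
  have h := (Matrix.PosDef.one.add_posSemidef hA).log_det_le_trace_sub_card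
  simpa [Matrix.trace_add] using h
end

section
/- Let n, m : ℕ, let M be a real m × n matrix, and let μ be the product measure on Fin n → ℝ whose coordinates are i.i.d. standard Gaussians (Measure.pi (fun _ => gaussianReal 0 1)). Then the Hutchinson estimator is unbiased: ∫ ‖M.mulVec v‖² dμ(v) = ∑_{i,j} (M i j)², i.e., the expectation equals the squared Frobenius norm of M, which also equals Matrix.trace (M * Mᵀ). -/
open MeasureTheory ProbabilityTheory Matrix

/-!
Expanding `‖M v‖² = ∑ᵢ ∑ⱼ ∑ₖ Mᵢⱼ Mᵢₖ vⱼ vₖ` and integrating term by term, only the second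
moments `𝔼[vⱼ vₖ]` of `v` enter. For independent centred coordinates of unit variance these are
`δⱼₖ`, so the expectation collapses to `∑ᵢ ∑ⱼ Mᵢⱼ²`.
-/

theorem integral_sum_mulVec_sq_of_isotropic {ι κ Ω : Type*} [Fintype ι] [Fintype κ]
    [DecidableEq κ] [MeasurableSpace Ω] {ν : Measure Ω} {X : Ω → κ → ℝ}
    (hint : ∀ j k, Integrable (fun ω ↦ X ω j * X ω k) ν)
    (hcov : ∀ j k, ∫ ω, X ω j * X ω k ∂ν = (1 : Matrix κ κ ℝ) j k) (M : Matrix ι κ ℝ) :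
    ∫ ω, ∑ i, (M *ᵥ X ω) i ^ 2 ∂ν = ∑ i, ∑ j, M i j ^ 2 := by
  have hexpand : ∀ ω, ∑ i, (M *ᵥ X ω) i ^ 2
      = ∑ i, ∑ j, ∑ k, M i j * M i k * (X ω j * X ω k) := fun ω ↦
    Finset.sum_congr rfl fun i _ ↦ by
      rw [mulVec, dotProduct, sq, Finset.sum_mul_sum]
      exact Finset.sum_congr rfl fun j _ ↦ Finset.sum_congr rfl fun k _ ↦ by ring
  simp_rw [hexpand]
  rw [integral_finsetSum _ fun i _ ↦ integrable_finsetSum _ fun j _ ↦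
    integrable_finsetSum _ fun k _ ↦ (hint j k).const_mul _]
  refine Finset.sum_congr rfl fun i _ ↦ ?_
  rw [integral_finsetSum _ fun j _ ↦ integrable_finsetSum _ fun k _ ↦ (hint j k).const_mul _]
  refine Finset.sum_congr rfl fun j _ ↦ ?_
  rw [integral_finsetSum _ fun k _ ↦ (hint j k).const_mul _]
  simp_rw [integral_const_mul, hcov, one_apply, mul_ite, mul_one, mul_zero,
    Finset.sum_ite_eq, Finset.mem_univ, if_true, sq]

section Pi

variable {ι : Type*} [Fintype ι] {μ : ι → Measure ℝ} [∀ i, IsProbabilityMeasure (μ i)]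

theorem memLp_eval_pi {p : ENNReal} {j : ι} (h : MemLp id p (μ j)) :
    MemLp (fun v : ι → ℝ ↦ v j) p (Measure.pi μ) :=
  h.comp_measurePreserving (measurePreserving_eval μ j)

theorem integrable_eval_mul_eval_pi {j k : ι} (hj : MemLp id 2 (μ j)) (hk : MemLp id 2 (μ k)) :
    Integrable (fun v : ι → ℝ ↦ v j * v k) (Measure.pi μ) :=
  (memLp_eval_pi hj).integrable_mul (memLp_eval_pi hk)

theorem integral_eval_mul_eval_pi [DecidableEq ι] (hmean : ∀ i, ∫ x, x ∂μ i = 0)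
    (hvar : ∀ i, ∫ x, x ^ 2 ∂μ i = 1) (j k : ι) :
    ∫ v : ι → ℝ, v j * v k ∂Measure.pi μ = (1 : Matrix ι ι ℝ) j k := by
  rcases eq_or_ne j k with rfl | hjk
  · rw [one_apply_eq, ← hvar j, ← integral_comp_eval (μ := μ) (by fun_prop)]
    simp_rw [sq]
  · have hindep : IndepFun (fun v : ι → ℝ ↦ v j) (fun v ↦ v k) (Measure.pi μ) :=
      (iIndepFun_pi (X := fun _ ↦ id) fun _ ↦ aemeasurable_id).indepFun hjk
    rw [one_apply_ne hjk, hindep.integral_fun_mul_eq_mul_integral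
      (measurable_pi_apply j).aestronglyMeasurable (measurable_pi_apply k).aestronglyMeasurable,
      integral_eval, hmean, zero_mul]

end Pi

theorem integral_sq_gaussianReal_zero (v : NNReal) : ∫ x, x ^ 2 ∂gaussianReal 0 v = v := by
  rw [← variance_of_integral_eq_zero aemeasurable_id' integral_id_gaussianReal]
  exact variance_fun_id_gaussianReal

/-- **Unbiasedness of the Hutchinson trace estimator.** If `v` is a standard
Gaussian vector (i.i.d. coordinates), then `𝔼 ‖M v‖² = ∑ᵢⱼ (M i j)²`, the squared
Frobenius norm of `M`, which equals `trace (M Mᵀ)`. -/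
theorem hutchinson_unbiased (n m : ℕ) (M : Matrix (Fin m) (Fin n) ℝ) :
    (∫ v, (∑ i, (M.mulVec v i) ^ 2) ∂(Measure.pi fun _ : Fin n => gaussianReal 0 1))
        = ∑ i, ∑ j, (M i j) ^ 2 ∧
      (∑ i, ∑ j, (M i j) ^ 2) = Matrix.trace (M * Mᵀ) := by
  have hL2 : MemLp id 2 (gaussianReal 0 1) := memLp_id_gaussianReal 2
  have hvar : ∫ x, x ^ 2 ∂gaussianReal 0 1 = 1 := by
    simpa using integral_sq_gaussianReal_zero 1
  refine ⟨integral_sum_mulVec_sq_of_isotropic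
    (fun j k ↦ integrable_eval_mul_eval_pi (j := j) (k := k) hL2 hL2)
    (integral_eval_mul_eval_pi (fun _ ↦ integral_id_gaussianReal) fun _ ↦ hvar) M, ?_⟩
  simp [trace, mul_apply, sq]
end
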